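/- For every x ∈ [0,1)^V one has \tilde f_G(x) = f_G((x_v/(1-x_v))_{v∈V}), as an equality of sums valued in the extended interval [0,∞]. -/

import Mathlib

open scoped Classical ENNReal

set_option linter.unusedSectionVars false

variable {V : Type*} [Fintype V] [DecidableEq V]

/-- An admissible swap exchanges two consecutive letters that are adjacent in `G`. -/
def AdjSwap (G : SimpleGraph V) (w w' : List V) : Prop :=
  ∃ (a b : List V) (u v : V), G.Adj u v ∧ w = a ++ u :: v :: b ∧ w' = a ++ v :: u :: b

/-- Two words are equivalent if one can be transformed into the other by finitely many
admissible swaps. -/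
def WordEquiv (G : SimpleGraph V) : List V → List V → Prop :=
  Relation.ReflTransGen (AdjSwap G)

lemma adjSwap_symm (G : SimpleGraph V) : Symmetric (AdjSwap G) := by
  rintro w w' ⟨a, b, u, v, h, rfl, rfl⟩
  exact ⟨a, b, v, u, h.symm, rfl, rfl⟩

/-- The setoid of words modulo admissible swaps. -/
def wordSetoid (G : SimpleGraph V) : Setoid (List V) where
  r := WordEquiv G
  iseqv := ⟨fun _ => Relation.ReflTransGen.refl,
    fun {a b} (h : Relation.ReflTransGen (AdjSwap G) a b) =>
      show Relation.ReflTransGen (AdjSwap G) b a by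
        induction h with
        | refl => exact Relation.ReflTransGen.refl
        | tail _ hs ih => exact Relation.ReflTransGen.head (adjSwap_symm G hs) ih,
    fun h h' => Relation.ReflTransGen.trans h h'⟩

/-- A word is `G`-reduced if between any two equal letters there is a letter distinct from
them and not adjacent to them. -/
def IsGReduced (G : SimpleGraph V) (w : List V) : Prop :=
  ∀ i j : Fin w.length, i < j → w.get i = w.get j →
    ∃ k : Fin w.length, i < k ∧ k < j ∧ w.get k ≠ w.get i ∧ ¬ G.Adj (w.get k) (w.get i)

/-- The product `x_{w_1} ⋯ x_{w_ℓ}` depends only on the equivalence class of a word. -/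
noncomputable def classProd (G : SimpleGraph V) (x : V → ℝ≥0∞) :
    Quotient (wordSetoid G) → ℝ≥0∞ :=
  Quotient.lift (fun w : List V => (w.map x).prod) (by
    intro a b h
    induction h with
    | refl => rfl
    | tail _ hs ih =>
        obtain ⟨a', b', u, v, huv, rfl, rfl⟩ := hs
        rw [ih]
        simp only [List.map_append, List.prod_append, List.map_cons, List.prod_cons]
        ring)

/-- `tildeF G x` : the sum over all equivalence classes of words of `∏ x_{w_i}`,
valued in `[0,∞]`. -/
noncomputable def tildeF (G : SimpleGraph V) (x : V → ℝ) : ℝ≥0∞ :=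
  ∑' c : Quotient (wordSetoid G), classProd G (fun v => ENNReal.ofReal (x v)) c

/-- `redF G x` : the sum over all equivalence classes of `G`-reduced words of `∏ x_{w_i}`,
valued in `[0,∞]`. -/
noncomputable def redF (G : SimpleGraph V) (x : V → ℝ) : ℝ≥0∞ :=
  ∑' c : {c : Quotient (wordSetoid G) // ∃ w, IsGReduced G w ∧ Quotient.mk (wordSetoid G) w = c},
    classProd G (fun v => ENNReal.ofReal (x v)) c.1

/-- The clique polynomial `𝕶_{G,V'}(x) = ∑_{cliques K ⊆ V'} (-1)^{|K|} ∏_{v ∈ K} x_v`. -/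
noncomputable def cliquePoly (G : SimpleGraph V) (V' : Finset V) (x : V → ℝ) : ℝ :=
  ∑ K ∈ V'.powerset.filter (fun K : Finset V => G.IsClique (K : Set V)),
    (-1 : ℝ) ^ K.card * ∏ v ∈ K, x v

/-- The Euclidean norm on `ℝ^V`. -/
noncomputable def eucNorm (x : V → ℝ) : ℝ := Real.sqrt (∑ v, x v ^ 2)

/-- `min_{V' ⊆ V} 𝕶_{G,V'}(x)`. -/
noncomputable def minK (G : SimpleGraph V) (x : V → ℝ) : ℝ :=
  Finset.univ.inf' ⟨∅, Finset.mem_univ _⟩ fun V' : Finset V => cliquePoly G V' x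

/-- `ρ(u) = inf {r ∈ [0,∞) : min_{V' ⊆ V} 𝕶_{G,V'}(r·u) = 0}`. -/
noncomputable def rho (G : SimpleGraph V) (u : V → ℝ) : ℝ :=
  sInf {r : ℝ | 0 ≤ r ∧ minK G (r • u) = 0}

/-- The region `R(G) = {x ∈ [0,1]^V : 𝕶_{G,V'}(x) > 0 for all V' ⊆ V}`. -/
def regionR (G : SimpleGraph V) : Set (V → ℝ) :=
  {x | (∀ v, x v ∈ Set.Icc (0 : ℝ) 1) ∧ ∀ V' : Finset V, 0 < cliquePoly G V' x}

/-!
Every word is equivalent to one obtained from a `G`-reduced word `a₁ ⋯ aₗ` by repeating each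
letter in place, `a₁^(n₁+1) ⋯ aₗ^(nₗ+1)`, and both the class of the reduced word and the
exponents are determined by the class of the expanded word. So the classes of words correspond
to pairs (reduced class, exponents in `ℕ^ℓ`), and summing the geometric series
`∑ₙ x^(n+1) = x / (1 - x)` in each exponent turns `f̃_G(x)` into `f_G(x / (1 - x))`.

Uniqueness rests on two invariants of admissible swaps: whether a letter `a` can be moved to the
front of a word (`CanLead`), and the word obtained by erasing the first `a`, which yields
cancellation `a w ≡ a w' → w ≡ w'`.
-/

namespace WordEquiv

variable {α β : Type*} {G : SimpleGraph α}

@[refl] lemma refl (w : List α) : WordEquiv G w w := Relation.ReflTransGen.refl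

lemma trans {w₁ w₂ w₃ : List α} (h : WordEquiv G w₁ w₂) (h' : WordEquiv G w₂ w₃) :
    WordEquiv G w₁ w₃ :=
  Relation.ReflTransGen.trans h h'

lemma of_adjSwap {w w' : List α} (h : AdjSwap G w w') : WordEquiv G w w' :=
  Relation.ReflTransGen.single h

lemma symm {w w' : List α} (h : WordEquiv G w w') : WordEquiv G w' w := by
  induction h with
  | refl => rfl
  | tail _ hs ih =>
    obtain ⟨a, b, u, v, huv, rfl, rfl⟩ := hs
    exact (of_adjSwap ⟨a, b, v, u, huv.symm, rfl, rfl⟩).trans ih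

lemma swap {u v : α} (huv : G.Adj u v) (s : List α) : WordEquiv G (u :: v :: s) (v :: u :: s) :=
  of_adjSwap ⟨[], s, u, v, huv, rfl, rfl⟩

lemma append_left (u : List α) {w w' : List α} (h : WordEquiv G w w') :
    WordEquiv G (u ++ w) (u ++ w') := by
  induction h with
  | refl => rfl
  | tail _ hs ih =>
    obtain ⟨a, b, p, q, hpq, rfl, rfl⟩ := hs
    exact ih.trans (of_adjSwap ⟨u ++ a, b, p, q, hpq, by simp, by simp⟩)

lemma append_right (u : List α) {w w' : List α} (h : WordEquiv G w w') :
    WordEquiv G (w ++ u) (w' ++ u) := by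
  induction h with
  | refl => rfl
  | tail _ hs ih =>
    obtain ⟨a, b, p, q, hpq, rfl, rfl⟩ := hs
    exact ih.trans (of_adjSwap ⟨a, b ++ u, p, q, hpq, by simp, by simp⟩)

lemma cons (a : α) {w w' : List α} (h : WordEquiv G w w') : WordEquiv G (a :: w) (a :: w') :=
  h.append_left [a]

lemma cons_append_comm {a : α} {v : List α} (hv : ∀ b ∈ v, G.Adj a b) :
    WordEquiv G (a :: v) (v ++ [a]) := by
  induction v with
  | nil => rfl
  | cons b v ih =>
    simp only [List.mem_cons, forall_eq_or_imp] at hv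
    exact (swap hv.1 v).trans ((ih hv.2).cons b)

lemma append_comm {u v : List α} (h : ∀ a ∈ u, ∀ b ∈ v, G.Adj a b) :
    WordEquiv G (u ++ v) (v ++ u) := by
  induction u with
  | nil => simp only [List.nil_append, List.append_nil]; rfl
  | cons a u ih =>
    simp only [List.mem_cons, forall_eq_or_imp] at h
    exact ((ih h.2).cons a).trans (by simpa using (cons_append_comm h.1).append_right u)

lemma flatMap {H : SimpleGraph β} {g : β → List α}
    (hg : ∀ x y, H.Adj x y → ∀ a ∈ g x, ∀ b ∈ g y, G.Adj a b) {s s' : List β}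
    (h : WordEquiv H s s') : WordEquiv G (s.flatMap g) (s'.flatMap g) := by
  induction h with
  | refl => rfl
  | tail _ hs ih =>
    obtain ⟨A, B, x, y, hxy, rfl, rfl⟩ := hs
    refine ih.trans ?_
    simpa [List.append_assoc] using
      ((append_comm (hg x y hxy)).append_right (B.flatMap g)).append_left (A.flatMap g)

lemma map {f : β → α} {s s' : List β} (h : WordEquiv (G.comap f) s s') :
    WordEquiv G (s.map f) (s'.map f) := by
  simpa only [← List.map_eq_flatMap] using
    h.flatMap (g := fun x => [f x]) (by simp)

end WordEquiv

section CanLead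

variable {α β : Type*} {G : SimpleGraph α}

def CanLead (G : SimpleGraph α) (a : α) : List α → Prop
  | [] => False
  | b :: w => b = a ∨ G.Adj a b ∧ CanLead G a w

@[simp] lemma canLead_nil (a : α) : ¬CanLead G a [] := id

@[simp] lemma canLead_cons (a b : α) (w : List α) :
    CanLead G a (b :: w) ↔ b = a ∨ G.Adj a b ∧ CanLead G a w :=
  Iff.rfl

lemma canLead_append_swap (a : α) (A B : List α) {u v : α} (huv : G.Adj u v) :
    CanLead G a (A ++ u :: v :: B) ↔ CanLead G a (A ++ v :: u :: B) := by
  induction A with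
  | nil =>
    have := huv.ne
    simp only [List.nil_append, canLead_cons]
    constructor <;> rintro (rfl | ⟨h, rfl | h'⟩) <;> simp_all [huv.symm]
  | cons b A ih => simp only [List.cons_append, canLead_cons, ih]

lemma WordEquiv.canLead_iff {w w' : List α} (h : WordEquiv G w w') (a : α) :
    CanLead G a w ↔ CanLead G a w' := by
  induction h with
  | refl => rfl
  | tail _ hs ih =>
    obtain ⟨A, B, u, v, huv, rfl, rfl⟩ := hs
    exact ih.trans (canLead_append_swap a A B huv)

lemma canLead_iff_exists_wordEquiv {a : α} {w : List α} :
    CanLead G a w ↔ ∃ u, WordEquiv G w (a :: u) := by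
  refine ⟨fun h => ?_, fun ⟨u, hu⟩ => (hu.canLead_iff a).2 (Or.inl rfl)⟩
  induction w with
  | nil => exact absurd h (canLead_nil a)
  | cons b w ih =>
    rcases h with rfl | ⟨hab, h⟩
    · exact ⟨w, .refl _⟩
    · obtain ⟨u, hu⟩ := ih h
      exact ⟨b :: u, (hu.cons b).trans (.swap hab.symm u)⟩

lemma canLead_map {f : β → α} {a : α} {s : List β} (h : CanLead G a (s.map f)) :
    ∃ y, f y = a ∧ CanLead (G.comap f) y s := by
  induction s with
  | nil => exact absurd h (canLead_nil a)
  | cons x s ih =>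
    rcases h with h | ⟨hax, h⟩
    · exact ⟨x, h, Or.inl rfl⟩
    · obtain ⟨y, rfl, hy⟩ := ih h
      exact ⟨y, rfl, Or.inr ⟨hax, hy⟩⟩

lemma canLead_replicate_append (a b : α) (n : ℕ) (w : List α) :
    CanLead G a (List.replicate (n + 1) b ++ w) ↔ CanLead G a (b :: w) := by
  induction n with
  | zero => rfl
  | succ n ih =>
    rw [List.replicate_succ, List.cons_append, canLead_cons, ih, canLead_cons]
    tauto

end CanLead

namespace WordEquiv

variable {α : Type*} [DecidableEq α] {G : SimpleGraph α}

lemma erase_append_swap (a : α) (A B : List α) {u v : α} (huv : G.Adj u v) :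
    WordEquiv G ((A ++ u :: v :: B).erase a) ((A ++ v :: u :: B).erase a) := by
  induction A with
  | nil =>
    simp only [List.nil_append, List.erase_cons, beq_iff_eq]
    by_cases hu : u = a
    · subst hu
      simp only [if_neg huv.ne.symm, if_true]
      rfl
    by_cases hv : v = a
    · subst hv
      simp only [if_neg hu, if_true]
      rfl
    · simpa only [if_neg hu, if_neg hv] using swap huv _
  | cons b A ih =>
    simp only [List.cons_append, List.erase_cons]
    split_ifs
    · exact of_adjSwap ⟨A, B, u, v, huv, rfl, rfl⟩
    · exact ih.cons b

lemma erase {w w' : List α} (h : WordEquiv G w w') (a : α) :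
    WordEquiv G (w.erase a) (w'.erase a) := by
  induction h with
  | refl => rfl
  | tail _ hs ih =>
    obtain ⟨A, B, u, v, huv, rfl, rfl⟩ := hs
    exact ih.trans (erase_append_swap a A B huv)

lemma of_cons {a : α} {w w' : List α} (h : WordEquiv G (a :: w) (a :: w')) :
    WordEquiv G w w' := by
  simpa using h.erase a

lemma of_append_left {u w w' : List α} (h : WordEquiv G (u ++ w) (u ++ w')) :
    WordEquiv G w w' := by
  induction u with
  | nil => exact h
  | cons a u ih => exact ih h.of_cons

end WordEquiv

section Reduced

variable {α : Type*} {G : SimpleGraph α}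

lemma canLead_iff_exists_get {a : α} {w : List α} :
    CanLead G a w ↔
      ∃ j : Fin w.length, w.get j = a ∧ ∀ k < j, w.get k = a ∨ G.Adj (w.get k) a := by
  induction w with
  | nil => simp
  | cons b w ih =>
    rw [canLead_cons, ih]
    simp only [List.length_cons, Fin.exists_fin_succ, List.get_eq_getElem, Fin.forall_fin_succ,
      Fin.val_zero, Fin.val_succ, List.getElem_cons_zero, List.getElem_cons_succ,
      Fin.succ_lt_succ_iff, Fin.not_lt_zero, Fin.succ_pos, lt_self_iff_false, IsEmpty.forall_iff,
      forall_const, implies_true, and_true]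
    by_cases hba : b = a
    · simp [hba]
    · simp only [hba, false_or, G.adj_comm b a]
      grind

lemma isGReduced_nil : IsGReduced G [] := fun i => i.elim0

lemma isGReduced_cons {a : α} {w : List α} :
    IsGReduced G (a :: w) ↔ ¬CanLead G a w ∧ IsGReduced G w := by
  rw [canLead_iff_exists_get]
  simp only [IsGReduced, List.length_cons, Fin.forall_fin_succ, List.get_eq_getElem,
    Fin.exists_fin_succ, Fin.val_zero, Fin.val_succ, List.getElem_cons_zero,
    List.getElem_cons_succ, Fin.succ_lt_succ_iff, Fin.not_lt_zero, Fin.succ_pos,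
    IsEmpty.forall_iff, forall_const, false_and, true_and, false_or]
  push Not
  simp only [@eq_comm _ a]

lemma isGReduced_append_swap (A B : List α) {u v : α} (huv : G.Adj u v) :
    IsGReduced G (A ++ u :: v :: B) ↔ IsGReduced G (A ++ v :: u :: B) := by
  induction A with
  | nil =>
    have hu : CanLead G u (v :: B) ↔ CanLead G u B := by simp [huv.ne.symm, huv]
    have hv : CanLead G v (u :: B) ↔ CanLead G v B := by simp [huv.ne, huv.symm]
    simp only [List.nil_append, isGReduced_cons, hu, hv]
    tauto
  | cons b A ih => simp only [List.cons_append, isGReduced_cons, ih, canLead_append_swap b A B huv]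

lemma WordEquiv.isGReduced_iff {w w' : List α} (h : WordEquiv G w w') :
    IsGReduced G w ↔ IsGReduced G w' := by
  induction h with
  | refl => rfl
  | tail _ hs ih =>
    obtain ⟨A, B, u, v, huv, rfl, rfl⟩ := hs
    exact ih.trans (isGReduced_append_swap A B huv)

end Reduced

section Expand

variable {α β : Type*} {G : SimpleGraph α}

def expand (z : List (α × ℕ)) : List α :=
  z.flatMap fun p => List.replicate (p.2 + 1) p.1

@[simp] lemma expand_cons (a : α) (n : ℕ) (z : List (α × ℕ)) :
    expand ((a, n) :: z) = List.replicate (n + 1) a ++ expand z := rfl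

lemma canLead_expand (a : α) (z : List (α × ℕ)) :
    CanLead G a (expand z) ↔ CanLead G a (z.map Prod.fst) := by
  induction z with
  | nil => rfl
  | cons p z ih =>
    rw [expand_cons, canLead_replicate_append, List.map_cons, canLead_cons, canLead_cons, ih]

lemma wordEquiv_expand {z z' : List (α × ℕ)} (h : WordEquiv (G.comap Prod.fst) z z') :
    WordEquiv G (expand z) (expand z') :=
  h.flatMap fun x y hxy a ha b hb => by
    rwa [List.eq_of_mem_replicate ha, List.eq_of_mem_replicate hb]

lemma WordEquiv.exists_lift {f : β → α} {s : List β} {w : List α}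
    (h : WordEquiv G (s.map f) w) : ∃ s', WordEquiv (G.comap f) s s' ∧ s'.map f = w := by
  induction h with
  | refl => exact ⟨s, .refl s, rfl⟩
  | tail _ hs ih =>
    obtain ⟨s₁, hs₁, hmap⟩ := ih
    obtain ⟨A, B, u, v, huv, rfl, rfl⟩ := hs
    obtain ⟨sA, _, rfl, rfl, h₁⟩ := List.map_eq_append_iff.1 hmap
    obtain ⟨x, _, rfl, rfl, h₂⟩ := List.map_eq_cons_iff.1 h₁
    obtain ⟨y, sB, rfl, rfl, rfl⟩ := List.map_eq_cons_iff.1 h₂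
    exact ⟨sA ++ y :: x :: _, hs₁.trans (.of_adjSwap ⟨sA, _, x, y, huv, rfl, rfl⟩),
      by simp⟩

/-- Entries with the same image under `f` never commute in `G.comap f`. -/
lemma WordEquiv.eq_of_map_eq {f : β → α} {s s' : List β} (h : WordEquiv (G.comap f) s s')
    (hmap : s.map f = s'.map f) : s = s' := by
  induction s generalizing s' with
  | nil => exact (List.map_eq_nil_iff.1 hmap.symm).symm
  | cons x s ih =>
    cases s' with
    | nil => simp at hmap
    | cons y s' => ?_
    simp only [List.map_cons, List.cons.injEq] at hmap
    have hyx : y = x := by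
      rcases (h.symm.canLead_iff x).2 (Or.inl rfl) with h' | ⟨hadj, -⟩
      · exact h'
      · simp [hmap.1] at hadj
    subst hyx
    rw [ih h.of_cons hmap.2]

end Expand

section Normalize

variable {α : Type*} [DecidableEq α] {G : SimpleGraph α}

def bumpFirst (a : α) : List (α × ℕ) → List (α × ℕ)
  | [] => []
  | (b, n) :: z => if b = a then (b, n + 1) :: z else (b, n) :: bumpFirst a z

lemma map_fst_bumpFirst (a : α) (z : List (α × ℕ)) :
    (bumpFirst a z).map Prod.fst = z.map Prod.fst := by
  induction z with
  | nil => rfl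
  | cons p z ih =>
    obtain ⟨b, n⟩ := p
    by_cases hb : b = a <;> simp [bumpFirst, hb, ih]

lemma wordEquiv_cons_expand_bumpFirst {a : α} {z : List (α × ℕ)}
    (h : CanLead G a (z.map Prod.fst)) : WordEquiv G (a :: expand z) (expand (bumpFirst a z)) := by
  induction z with
  | nil => exact absurd h (canLead_nil a)
  | cons p z ih =>
    obtain ⟨b, n⟩ := p
    by_cases hb : b = a
    · subst hb
      simp only [bumpFirst, if_true, expand_cons, List.replicate_succ, List.cons_append]
      rfl
    · obtain ⟨hab, h⟩ := h.resolve_left hb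
      simp only [bumpFirst, if_neg hb, expand_cons]
      have hcomm : WordEquiv G (a :: List.replicate (n + 1) b) (List.replicate (n + 1) b ++ [a]) :=
        .cons_append_comm fun c hc => List.eq_of_mem_replicate hc ▸ hab
      have h₁ : WordEquiv G (a :: (List.replicate (n + 1) b ++ expand z))
          (List.replicate (n + 1) b ++ a :: expand z) := by
        simpa using hcomm.append_right (expand z)
      exact h₁.trans ((ih h).append_left _)

lemma exists_wordEquiv_expand (G : SimpleGraph α) (w : List α) :
    ∃ z, IsGReduced G (z.map Prod.fst) ∧ WordEquiv G w (expand z) := by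
  induction w with
  | nil => exact ⟨[], isGReduced_nil, .refl _⟩
  | cons a w ih =>
    obtain ⟨z, hz, hw⟩ := ih
    by_cases h : CanLead G a (z.map Prod.fst)
    · exact ⟨bumpFirst a z, by rwa [map_fst_bumpFirst],
        (hw.cons a).trans (wordEquiv_cons_expand_bumpFirst h)⟩
    · exact ⟨(a, 0) :: z, isGReduced_cons.2 ⟨h, hz⟩, hw.cons a⟩

lemma le_of_wordEquiv_replicate_append {a : α} {m n : ℕ} {z z' : List (α × ℕ)}
    (hz' : ¬CanLead G a (z'.map Prod.fst))
    (h : WordEquiv G (List.replicate (m + 1) a ++ expand z)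
      (List.replicate (n + 1) a ++ expand z')) :
    m ≤ n := by
  by_contra! hnm
  obtain ⟨k, rfl⟩ : ∃ k, m = n + 1 + k := ⟨m - n - 1, by omega⟩
  rw [show n + 1 + k + 1 = (n + 1) + (k + 1) by omega, List.replicate_add, List.append_assoc] at h
  apply hz'
  rw [← canLead_expand, ← h.of_append_left.canLead_iff, canLead_replicate_append]
  exact Or.inl rfl

/-- The first letter `a` of `expand z` leads `expand z'`, so some entry `(a, n)` of `z'` can be
moved to the front; reducedness forbids a further `a` from following either run of `a`s, which
forces `n = m`, and cancelling the runs leaves an instance of the induction hypothesis. -/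
lemma WordEquiv.of_expand {z z' : List (α × ℕ)} (hz : IsGReduced G (z.map Prod.fst))
    (hz' : IsGReduced G (z'.map Prod.fst)) (h : WordEquiv G (expand z) (expand z')) :
    WordEquiv (G.comap Prod.fst) z z' := by
  induction z generalizing z' with
  | nil =>
    cases z' with
    | nil => rfl
    | cons y z' =>
      obtain ⟨b, n⟩ := y
      exact absurd ((h.canLead_iff b).2 ((canLead_replicate_append ..).2 (Or.inl rfl)))
        (canLead_nil b)
  | cons p z ih =>
    obtain ⟨a, m⟩ := p
    have hlead : CanLead G a (z'.map Prod.fst) := by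
      rw [← canLead_expand, ← h.canLead_iff, expand_cons, canLead_replicate_append]
      exact Or.inl rfl
    obtain ⟨⟨_, n⟩, rfl, hy⟩ := canLead_map hlead
    obtain ⟨z'', hz''⟩ := canLead_iff_exists_wordEquiv.1 hy
    have hred'' : IsGReduced G (_ :: z''.map Prod.fst) := hz''.map.isGReduced_iff.1 hz'
    rw [List.map_cons, isGReduced_cons] at hz
    rw [isGReduced_cons] at hred''
    have h' := h.trans (wordEquiv_expand hz'')
    rw [expand_cons, expand_cons] at h'
    obtain rfl : m = n :=
      le_antisymm (le_of_wordEquiv_replicate_append hred''.1 h')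
        (le_of_wordEquiv_replicate_append hz.1 h'.symm)
    exact ((ih hz.2 hred''.2 h'.of_append_left).cons _).trans hz''.symm

end Normalize

section Fiber

variable {α ι : Type*}

noncomputable def consFiberEquiv (a : α) (r : List α) :
    ι × {z : List (α × ι) // z.map Prod.fst = r} ≃
      {z : List (α × ι) // z.map Prod.fst = a :: r} :=
  Equiv.ofBijective (fun p => ⟨(a, p.1) :: p.2.1, by simp [p.2.2]⟩) <| by
    constructor
    · rintro ⟨i, z, hz⟩ ⟨j, z', hz'⟩ h
      simp only [Subtype.mk.injEq, List.cons.injEq, Prod.mk.injEq, true_and] at h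
      obtain ⟨rfl, rfl⟩ := h
      rfl
    · rintro ⟨_ | ⟨⟨b, i⟩, z⟩, hz⟩
      · simp at hz
      · obtain ⟨rfl, hr⟩ := List.cons.inj hz
        exact ⟨(i, ⟨z, hr⟩), rfl⟩

lemma tsum_prod_map_fiber (f : α × ι → ℝ≥0∞) (r : List α) :
    ∑' z : {z : List (α × ι) // z.map Prod.fst = r}, (z.1.map f).prod =
      (r.map fun a => ∑' i, f (a, i)).prod := by
  induction r with
  | nil =>
    have hnil (z : {z : List (α × ι) // z.map Prod.fst = []}) : z = ⟨[], rfl⟩ :=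
      Subtype.ext (List.map_eq_nil_iff.1 z.2)
    rw [tsum_eq_single ⟨[], rfl⟩ fun z hz => absurd (hnil z) hz]
    rfl
  | cons a r ih =>
    rw [List.map_cons, List.prod_cons, ← ih, ← ENNReal.tsum_mul_right]
    simp_rw [← ENNReal.tsum_mul_left]
    rw [← ENNReal.tsum_prod, ← (consFiberEquiv a r).tsum_eq]
    rfl

end Fiber

lemma prod_map_expand {α M : Type*} [CommMonoid M] (X : α → M) (z : List (α × ℕ)) :
    ((expand z).map X).prod = (z.map fun p => X p.1 ^ (p.2 + 1)).prod := by
  induction z with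
  | nil => rfl
  | cons p z ih =>
    obtain ⟨a, n⟩ := p
    simp [ih]

lemma ENNReal.ofReal_div_one_sub_eq_tsum {x : ℝ} (h₀ : 0 ≤ x) (h₁ : x < 1) :
    ENNReal.ofReal (x / (1 - x)) = ∑' n : ℕ, ENNReal.ofReal x ^ (n + 1) := by
  simp_rw [pow_succ', ENNReal.tsum_mul_left, ENNReal.tsum_geometric,
    ENNReal.ofReal_div_of_pos (sub_pos.2 h₁), div_eq_mul_inv, ENNReal.ofReal_sub 1 h₀,
    ENNReal.ofReal_one]

section ReducedClass

variable {G : SimpleGraph V}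

abbrev ReducedClass (G : SimpleGraph V) : Type _ :=
  {c : Quotient (wordSetoid G) // ∃ w, IsGReduced G w ∧ Quotient.mk (wordSetoid G) w = c}

noncomputable def ReducedClass.rep (c : ReducedClass G) : List V := c.2.choose

lemma ReducedClass.isGReduced_rep (c : ReducedClass G) : IsGReduced G c.rep := c.2.choose_spec.1

lemma ReducedClass.mk_rep (c : ReducedClass G) : Quotient.mk (wordSetoid G) c.rep = c.1 :=
  c.2.choose_spec.2

def expandClass (G : SimpleGraph V) :
    (Σ c : ReducedClass G, {z : List (V × ℕ) // z.map Prod.fst = c.rep}) →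
      Quotient (wordSetoid G) :=
  fun p => Quotient.mk (wordSetoid G) (expand p.2.1)

lemma expandClass_injective (G : SimpleGraph V) : Function.Injective (expandClass G) := by
  rintro ⟨c, z, hz⟩ ⟨c', z', hz'⟩ h
  have hzz' : WordEquiv (G.comap Prod.fst) z z' :=
    .of_expand (hz ▸ c.isGReduced_rep) (hz' ▸ c'.isGReduced_rep) (Quotient.exact h)
  obtain rfl : c = c' := Subtype.ext <| by
    rw [← c.mk_rep, ← c'.mk_rep, ← hz, ← hz']
    exact Quotient.sound hzz'.map
  obtain rfl : z = z' := hzz'.eq_of_map_eq (hz.trans hz'.symm)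
  rfl

lemma expandClass_surjective (G : SimpleGraph V) : Function.Surjective (expandClass G) := by
  intro q
  induction q using Quotient.inductionOn with
  | h w =>
    obtain ⟨z, hz, hw⟩ := exists_wordEquiv_expand G w
    let c : ReducedClass G := ⟨_, z.map Prod.fst, hz, rfl⟩
    obtain ⟨z', hzz', hz'⟩ :=
      (Quotient.exact c.mk_rep : WordEquiv G c.rep (z.map Prod.fst)).symm.exists_lift
    exact ⟨⟨c, z', hz'⟩, Quotient.sound ((wordEquiv_expand hzz').symm.trans hw.symm)⟩

end ReducedClass

/-- for `x ∈ [0,1)^V`, `tildeF G x = f_G ((x_v/(1-x_v))_v)`. -/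
theorem tildeF_eq_redF (G : SimpleGraph V) (x : V → ℝ)
    (hx : ∀ v, x v ∈ Set.Ico (0 : ℝ) 1) :
    tildeF G x = redF G (fun v => x v / (1 - x v)) := by
  set X : V → ℝ≥0∞ := fun v => ENNReal.ofReal (x v)
  have hY (v : V) : ENNReal.ofReal (x v / (1 - x v)) = ∑' n : ℕ, X v ^ (n + 1) :=
    ENNReal.ofReal_div_one_sub_eq_tsum (hx v).1 (hx v).2
  let e := Equiv.ofBijective _ ⟨expandClass_injective G, expandClass_surjective G⟩
  calc tildeF G x
      = ∑' p, classProd G X (expandClass G p) := (e.tsum_eq _).symm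
    _ = ∑' c : ReducedClass G, ∑' z : {z : List (V × ℕ) // z.map Prod.fst = c.rep},
          (z.1.map fun p => X p.1 ^ (p.2 + 1)).prod := by
        rw [ENNReal.tsum_sigma']
        simp only [expandClass, classProd, Quotient.lift_mk, prod_map_expand]
    _ = ∑' c : ReducedClass G, (c.rep.map fun v => ENNReal.ofReal (x v / (1 - x v))).prod := by
        simp only [tsum_prod_map_fiber, hY]
    _ = redF G (fun v => x v / (1 - x v)) :=
        tsum_congr fun c => by rw [← c.mk_rep]; rfl
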